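/- Let H be self-adjoint, and let Ψ_k : [0, τ] → ℋ take values in unit vectors with Ψ_k(t) ∈ D(H) for all t, ξ_k := sup_t ‖H Ψ_k(t)‖ < ∞ and η_k := sup_{s≠t} ‖Ψ_k(s) − Ψ_k(t)‖ / |s − t| < ∞. Suppose Φ is a unit vector with ⟨Ψ_k(t_l), Φ⟩ = 0. Then for Δ_{l+1} := t_{l+1} − t_l > 0, one has |⟨Ψ_k(t_{l+1}), e^{-iΔ_{l+1} H} Φ⟩|² ≤ 2 Δ_{l+1}² (ξ_k² + η_k²). -/

import Mathlib

/-!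
Since `e^{-iΔH}` has adjoint `e^{iΔH}` and `Ψk tl ⊥ Φ`,
`⟪Ψk tl1, e^{-iΔH} Φ⟫ = ⟪(e^{iΔH} - 1) Ψk tl1 + (Ψk tl1 - Ψk tl), Φ⟫`.
The curve `s ↦ e^{isH} ψ` has derivative `e^{isH} (i H ψ)`, of constant norm `‖H ψ‖` by unitarity,
so the mean value theorem bounds the first vector by `Δ ξ`; the Lipschitz bound gives `Δ η` for
the second, and `(a + b)² ≤ 2 (a² + b²)` finishes.
-/

open scoped InnerProductSpace

/-- The unitary group `e^{-isH}` generated by a (bounded) self-adjoint operator `H`. -/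
noncomputable def timeEvol {𝓗 : Type*} [NormedAddCommGroup 𝓗] [InnerProductSpace ℂ 𝓗]
    [CompleteSpace 𝓗] (H : 𝓗 →L[ℂ] 𝓗) (s : ℝ) : 𝓗 →L[ℂ] 𝓗 :=
  NormedSpace.exp ((-(s : ℂ)) • Complex.I • H)

open NormedSpace

theorem IsSelfAdjoint.neg_I_smul_mem_skewAdjoint {A : Type*} [AddCommGroup A] [Module ℂ A]
    [StarAddMonoid A] [StarModule ℂ A] {a : A} (ha : IsSelfAdjoint a) :
    -(Complex.I • a) ∈ skewAdjoint A :=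
  neg_mem (ha.smul_mem_skewAdjoint RCLike.I_mem_skewAdjoint)

section SkewAdjoint

variable {E : Type*} [NormedAddCommGroup E] [InnerProductSpace ℂ E] [CompleteSpace E]
  {A : E →L[ℂ] E}

theorem norm_exp_apply_of_mem_skewAdjoint (hA : A ∈ skewAdjoint (E →L[ℂ] E)) (x : E) :
    ‖exp A x‖ = ‖x‖ := by
  have hU : exp A ∈ unitary (E →L[ℂ] E) := by
    let +nondep : NormedAlgebra ℚ (E →L[ℂ] E) := .restrictScalars ℚ ℂ (E →L[ℂ] E)
    exact exp_mem_unitary_of_mem_skewAdjoint hA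
  exact ContinuousLinearMap.norm_map_of_mem_unitary hU x

theorem norm_exp_smul_apply_sub_le (hA : A ∈ skewAdjoint (E →L[ℂ] E)) (s : ℝ) (x : E) :
    ‖exp (s • A) x - x‖ ≤ |s| * ‖A x‖ := by
  have hderiv (u : ℝ) : HasDerivAt (fun u : ℝ => exp (u • A) x) (exp (u • A) (A x)) u :=
    ((ContinuousLinearMap.apply ℂ E x).restrictScalars ℝ).hasFDerivAt.comp_hasDerivAt u
      (hasDerivAt_exp_smul_const A u)
  have hbound (u : ℝ) : ‖exp (u • A) (A x)‖ ≤ ‖A x‖ :=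
    (norm_exp_apply_of_mem_skewAdjoint (skewAdjoint.smul_mem u hA) _).le
  simpa [mul_comm] using convex_univ.norm_image_sub_le_of_norm_hasDerivWithin_le
    (fun u _ => (hderiv u).hasDerivWithinAt) (fun u _ => hbound u) (Set.mem_univ 0)
    (Set.mem_univ s)

end SkewAdjoint

section TimeEvol

variable {𝓗 : Type*} [NormedAddCommGroup 𝓗] [InnerProductSpace ℂ 𝓗] [CompleteSpace 𝓗]
  {H : 𝓗 →L[ℂ] 𝓗}

theorem timeEvol_eq_exp_smul (H : 𝓗 →L[ℂ] 𝓗) (s : ℝ) :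
    timeEvol H s = exp (s • -(Complex.I • H)) := by
  rw [timeEvol, neg_smul, smul_neg, Complex.coe_smul]

theorem adjoint_timeEvol (hH : IsSelfAdjoint H) (s : ℝ) :
    ContinuousLinearMap.adjoint (timeEvol H s) = timeEvol H (-s) := by
  rw [← ContinuousLinearMap.star_eq_adjoint, timeEvol_eq_exp_smul, timeEvol_eq_exp_smul,
    star_exp, star_smul, star_trivial, hH.neg_I_smul_mem_skewAdjoint, neg_smul, smul_neg]

theorem norm_timeEvol_apply_sub_le (hH : IsSelfAdjoint H) (s : ℝ) (x : 𝓗) :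
    ‖timeEvol H s x - x‖ ≤ |s| * ‖H x‖ := by
  simpa [timeEvol_eq_exp_smul, norm_smul] using
    norm_exp_smul_apply_sub_le hH.neg_I_smul_mem_skewAdjoint s x

end TimeEvol

theorem leakage_one_step_estimate_general {𝓗 : Type*} [NormedAddCommGroup 𝓗]
    [InnerProductSpace ℂ 𝓗] [CompleteSpace 𝓗]
    (H : 𝓗 →L[ℂ] 𝓗) (hH : IsSelfAdjoint H) (τ : ℝ)
    (Ψk : ℝ → 𝓗)
    (ξ η : ℝ)
    (hξ : ∀ t ∈ Set.Icc (0 : ℝ) τ, ‖H (Ψk t)‖ ≤ ξ)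
    (hη : ∀ s ∈ Set.Icc (0 : ℝ) τ, ∀ t ∈ Set.Icc (0 : ℝ) τ,
      ‖Ψk s - Ψk t‖ ≤ η * |s - t|)
    (tl tl1 : ℝ) (htl : tl ∈ Set.Icc (0 : ℝ) τ) (htl1 : tl1 ∈ Set.Icc (0 : ℝ) τ)
    (hΔ : 0 < tl1 - tl)
    (Φ : 𝓗) (hΦ : ‖Φ‖ = 1) (horth : ⟪Ψk tl, Φ⟫_ℂ = 0) :
    ‖⟪Ψk tl1, timeEvol H (tl1 - tl) Φ⟫_ℂ‖ ^ 2 ≤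
      2 * (tl1 - tl) ^ 2 * (ξ ^ 2 + η ^ 2) := by
  set Δ := tl1 - tl
  set ψ := Ψk tl1
  set V := timeEvol H (-Δ)
  have hsplit : ⟪ψ, timeEvol H Δ Φ⟫_ℂ = ⟪(V ψ - ψ) + (ψ - Ψk tl), Φ⟫_ℂ := by
    rw [sub_add_sub_cancel, inner_sub_left, horth, sub_zero,
      ← ContinuousLinearMap.adjoint_inner_left, adjoint_timeEvol hH]
  have hV : ‖V ψ - ψ‖ ≤ Δ * ξ := by
    calc ‖V ψ - ψ‖ ≤ |-Δ| * ‖H ψ‖ := norm_timeEvol_apply_sub_le hH (-Δ) ψ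
      _ ≤ Δ * ξ := by rw [abs_neg, abs_of_pos hΔ]; gcongr; exact hξ tl1 htl1
  have hΨ : ‖ψ - Ψk tl‖ ≤ Δ * η := by
    rw [mul_comm, ← abs_of_pos hΔ]
    exact hη tl1 htl1 tl htl
  have hbound : ‖⟪ψ, timeEvol H Δ Φ⟫_ℂ‖ ≤ Δ * ξ + Δ * η := by
    calc ‖⟪ψ, timeEvol H Δ Φ⟫_ℂ‖ ≤ ‖(V ψ - ψ) + (ψ - Ψk tl)‖ * ‖Φ‖ :=
          hsplit ▸ norm_inner_le_norm _ _
      _ ≤ Δ * ξ + Δ * η := by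
          rw [hΦ, mul_one]
          exact (norm_add_le _ _).trans (add_le_add hV hΨ)
  nlinarith [norm_nonneg ⟪ψ, timeEvol H Δ Φ⟫_ℂ, sq_nonneg (Δ * ξ - Δ * η)]

/-- Let `H` be self-adjoint and `Ψk : [0,τ] → 𝓗` a curve of unit vectors with
`‖H Ψk(t)‖ ≤ ξ` and Lipschitz constant `η` on `[0,τ]`.  If `Φ` is a unit vector with
`⟨Ψk(t_l), Φ⟩ = 0`, then for `Δ = t_{l+1} − t_l > 0`,
`|⟨Ψk(t_{l+1}), e^{-iΔH} Φ⟩|² ≤ 2 Δ² (ξ² + η²)`. -/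
theorem leakage_one_step_estimate {𝓗 : Type*} [NormedAddCommGroup 𝓗]
    [InnerProductSpace ℂ 𝓗] [CompleteSpace 𝓗]
    (H : 𝓗 →L[ℂ] 𝓗) (hH : IsSelfAdjoint H) (τ : ℝ) (hτ : 0 < τ)
    (Ψk : ℝ → 𝓗) (hunit : ∀ t ∈ Set.Icc (0 : ℝ) τ, ‖Ψk t‖ = 1)
    (ξ η : ℝ)
    (hξ : ∀ t ∈ Set.Icc (0 : ℝ) τ, ‖H (Ψk t)‖ ≤ ξ)
    (hη : ∀ s ∈ Set.Icc (0 : ℝ) τ, ∀ t ∈ Set.Icc (0 : ℝ) τ,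
      ‖Ψk s - Ψk t‖ ≤ η * |s - t|)
    (tl tl1 : ℝ) (htl : tl ∈ Set.Icc (0 : ℝ) τ) (htl1 : tl1 ∈ Set.Icc (0 : ℝ) τ)
    (hΔ : 0 < tl1 - tl)
    (Φ : 𝓗) (hΦ : ‖Φ‖ = 1) (horth : ⟪Ψk tl, Φ⟫_ℂ = 0) :
    ‖⟪Ψk tl1, timeEvol H (tl1 - tl) Φ⟫_ℂ‖ ^ 2 ≤
      2 * (tl1 - tl) ^ 2 * (ξ ^ 2 + η ^ 2) :=
  leakage_one_step_estimate_general H hH τ Ψk ξ η hξ hη tl tl1 htl htl1 hΔ Φ hΦ horth
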